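/- Let DoG(x,y) = (A/γ²)·exp(-(x²+y²)/(2γ²σ²)) - A·exp(-(x²+y²)/(2σ²)) with σ > 0, 0 < γ < 1, A > 0 (equal coefficients). Then DoG(x,y) = 0 if and only if x² + y² = r² where r = 2γσ·√((-ln γ)/(1-γ²)). Equivalently, σ = (r/(2γ))·√((1-γ²)/(-ln γ)). -/

import Mathlib

open Real MeasureTheory

/-!
Dividing the two Gaussians, `DoG = 0` says `exp (s / (2σ²) - s / (2γ²σ²)) = γ²` with
`s = x² + y²`; taking logarithms leaves an equation linear in `s`, whose unique solution is `r²`.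
-/

lemma div_mul_exp_sub_mul_exp_eq_zero_iff {A c u v : ℝ} (hA : A ≠ 0) (hc : 0 < c) :
    A / c * exp u - A * exp v = 0 ↔ u = v + log c := by
  rw [sub_eq_zero, div_mul_eq_mul_div, div_eq_iff hc.ne', mul_assoc, mul_right_inj' hA,
    ← exp_eq_exp (x := u), exp_add, exp_log hc]

lemma neg_div_mul_eq_neg_div_add_iff {s a g L : ℝ} (ha : a ≠ 0) (hg0 : g ≠ 0) (hg1 : g ≠ 1) :
    -s / (g * a) = -s / a + L ↔ s = a * g * -L / (1 - g) := by
  have h1g : 1 - g ≠ 0 := sub_ne_zero.mpr (Ne.symm hg1)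
  rw [eq_div_iff h1g]
  field_simp
  constructor <;> intro h <;> linear_combination -h

lemma sq_two_mul_mul_sqrt_neg_log_div {γ σ : ℝ} (hγ0 : 0 < γ) (hγ1 : γ < 1) :
    (2 * γ * σ * √(-log γ / (1 - γ ^ 2))) ^ 2 =
      2 * σ ^ 2 * γ ^ 2 * -log (γ ^ 2) / (1 - γ ^ 2) := by
  have hlog : 0 ≤ -log γ := neg_nonneg.mpr (log_nonpos hγ0.le hγ1.le)
  have h1γ : 0 ≤ 1 - γ ^ 2 := by nlinarith
  rw [mul_pow, sq_sqrt (div_nonneg hlog h1γ), log_pow]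
  push_cast
  ring

theorem dog_zero_set (σ γ A : ℝ) (hσ : 0 < σ) (hγ0 : 0 < γ) (hγ1 : γ < 1) (hA : 0 < A)
    (r : ℝ) (hr : r = 2 * γ * σ * Real.sqrt ((-Real.log γ) / (1 - γ ^ 2))) :
    ∀ x y : ℝ,
      ((A / γ ^ 2) * Real.exp (-(x ^ 2 + y ^ 2) / (2 * γ ^ 2 * σ ^ 2)) -
          A * Real.exp (-(x ^ 2 + y ^ 2) / (2 * σ ^ 2)) = 0 ↔ x ^ 2 + y ^ 2 = r ^ 2) := by
  intro x y
  have hγ2 : γ ^ 2 ≠ 1 := by nlinarith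
  rw [div_mul_exp_sub_mul_exp_eq_zero_iff hA.ne' (by positivity),
    show 2 * γ ^ 2 * σ ^ 2 = γ ^ 2 * (2 * σ ^ 2) by ring,
    neg_div_mul_eq_neg_div_add_iff (by positivity) (by positivity) hγ2, hr,
    sq_two_mul_mul_sqrt_neg_log_div hγ0 hγ1]
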